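/- Nontrivial mutual information for the fully-overlapping uniform case (eqs. 46b, 47): let p1, p2 > 0 with p1 + p2 = 1 and 0 < r < 1, and consider the joint probability mass function on {1,2} × {1,2} given by p(1,1) = p1·(1 − r), p(1,2) = p1·r, p(2,1) = 0, p(2,2) = p2 (this is the joint distribution of true class T and decision Y when, for uniform class-conditional densities with the support of class 2 fully contained in that of class 1, the overlap region is decided as class 2). Then 0 < I(T; Y) < H(T), i.e., the normalized mutual information NI = I(T;Y)/H(T) satisfies 0 < NI < 1; in particular such a decision yields strictly positive information, whereas the 'majority-taking-all' decision (all outputs equal to class 1) yields I(T;Y) = 0 and is therefore never chosen by a mutual-information classifier. -/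

import Mathlib

/-- Mutual information (in bits) of a 2×2 joint pmf with entries
`p(1,1) = a`, `p(1,2) = b`, `p(2,1) = c`, `p(2,2) = d`
(terms with zero joint mass contribute 0, as `x·log₂(...) = 0` when `x = 0`). -/
noncomputable def mi2 (a b c d : ℝ) : ℝ :=
  a * Real.logb 2 (a / ((a + b) * (a + c))) +
  b * Real.logb 2 (b / ((a + b) * (b + d))) +
  c * Real.logb 2 (c / ((c + d) * (a + c))) +
  d * Real.logb 2 (d / ((c + d) * (b + d)))

/-- Binary entropy (in bits), with the convention `0·log₂ 0 = 0`. -/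
noncomputable def binEnt (e : ℝ) : ℝ :=
  -(e * Real.logb 2 e) - (1 - e) * Real.logb 2 (1 - e)

/-! Write `a, b, 0, d` for the joint masses. Termwise Gibbs (`log x ≥ 1 - 1/x`) bounds
`I(T;Y) · ln 2` below by `a·d`, the gap between the joint mass `1` and the product mass
`1 - a·d` on the support. Conversely `H(T) - I(T;Y) = H(T | Y)`, and since `Y = 1` forces
`T = 1` this is `(b + d) · h(b / (b + d))`, the entropy of the mixed column `Y = 2`, which is
positive. -/

open Real

lemma binEnt_eq_binEntropy_div_log_two (e : ℝ) : binEnt e = binEntropy e / log 2 := by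
  simp only [binEnt, binEntropy, logb, log_inv]
  ring

lemma binEnt_pos {e : ℝ} (he₀ : 0 < e) (he₁ : e < 1) : 0 < binEnt e := by
  rw [binEnt_eq_binEntropy_div_log_two]
  exact div_pos (binEntropy_pos he₀ he₁) (log_pos one_lt_two)

lemma sub_div_log_le_mul_logb {β p q : ℝ} (hβ : 1 < β) (hp : 0 < p) (hq : 0 < q) :
    (p - q) / log β ≤ p * logb β (p / q) := by
  have hgibbs : p * (1 - (p / q)⁻¹) ≤ p * log (p / q) :=
    mul_le_mul_of_nonneg_left (one_sub_inv_le_log_of_pos (div_pos hp hq)) hp.le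
  rw [inv_div, mul_one_sub, mul_div_cancel₀ _ hp.ne'] at hgibbs
  rw [logb, ← mul_div_assoc]
  exact div_le_div_of_nonneg_right hgibbs (log_pos hβ).le

lemma mi2_pos_of_third_eq_zero {a b d : ℝ} (ha : 0 < a) (hb : 0 < b) (hd : 0 < d)
    (hsum : a + b + d = 1) : 0 < mi2 a b 0 d := by
  simp only [mi2, zero_mul, add_zero, zero_add]
  have h₁ := sub_div_log_le_mul_logb one_lt_two ha (by positivity : 0 < (a + b) * a)
  have h₂ := sub_div_log_le_mul_logb one_lt_two hb (by positivity : 0 < (a + b) * (b + d))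
  have h₄ := sub_div_log_le_mul_logb one_lt_two hd (by positivity : 0 < d * (b + d))
  have hdeficit : (a - (a + b) * a) / log 2 + (b - (a + b) * (b + d)) / log 2
      + (d - d * (b + d)) / log 2 = a * d / log 2 := by
    rw [← add_div, ← add_div]
    congr 1
    linear_combination (-(a + b + d)) * hsum
  have hgain : 0 < a * d / log 2 := by have := log_pos one_lt_two; positivity
  linarith

lemma mi2_of_third_eq_zero {a b d : ℝ} (ha : 0 < a) (hb : 0 < b) (hd : 0 < d) :
    mi2 a b 0 d = b * logb 2 b - (a + b) * logb 2 (a + b) - (b + d) * logb 2 (b + d) := by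
  simp only [mi2, zero_mul, add_zero, zero_add]
  rw [mul_comm (a + b) a, div_mul_cancel_left₀ ha.ne', mul_comm d, div_mul_cancel_left₀ hd.ne',
    logb_inv, logb_inv, logb_div hb.ne' (by positivity), logb_mul (by positivity) (by positivity)]
  ring

lemma mul_binEnt_div_add {b d : ℝ} (hb : 0 < b) (hd : 0 < d) :
    (b + d) * binEnt (b / (b + d)) =
      (b + d) * logb 2 (b + d) - b * logb 2 b - d * logb 2 d := by
  have hs : b + d ≠ 0 := by positivity
  rw [binEnt, (by field_simp; ring : 1 - b / (b + d) = d / (b + d)),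
    logb_div hb.ne' hs, logb_div hd.ne' hs]
  field_simp
  ring

lemma mi2_lt_binEnt_of_third_eq_zero {a b d : ℝ} (ha : 0 < a) (hb : 0 < b) (hd : 0 < d)
    (hsum : a + b + d = 1) : mi2 a b 0 d < binEnt (a + b) := by
  have hgroup : binEnt (a + b) - mi2 a b 0 d = (b + d) * binEnt (b / (b + d)) := by
    rw [mul_binEnt_div_add hb hd, mi2_of_third_eq_zero ha hb hd, binEnt,
      (by linarith : 1 - (a + b) = d)]
    ring
  have hpos : 0 < (b + d) * binEnt (b / (b + d)) :=
    mul_pos (by positivity)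
      (binEnt_pos (by positivity) ((div_lt_one (by positivity)).2 (by linarith)))
  linarith

lemma mi2_of_second_column_eq_zero {a c : ℝ} (hsum : a + c = 1) : mi2 a 0 c 0 = 0 := by
  simp only [mi2, add_zero, zero_mul, hsum, mul_one]
  have hself (x : ℝ) : x * logb 2 (x / x) = 0 := by
    rcases eq_or_ne x 0 with rfl | hx <;> simp [*]
  rw [hself, hself, add_zero]

/-- Nontrivial mutual information for the fully-overlapping uniform case
(eqs. 46b, 47): the decision assigning the overlap region to class 2 yields
`0 < I(T;Y) < H(T)` (i.e. `0 < NI < 1`), whereas the majority-taking-all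
decision yields `I(T;Y) = 0` and is therefore never chosen by a
mutual-information classifier. -/
theorem fully_overlapping_uniform_mutual_info
    (p1 p2 r : ℝ) (hp1 : 0 < p1) (hp2 : 0 < p2) (hp : p1 + p2 = 1)
    (hr0 : 0 < r) (hr1 : r < 1) :
    (0 < mi2 (p1 * (1 - r)) (p1 * r) 0 p2 ∧
      mi2 (p1 * (1 - r)) (p1 * r) 0 p2 < binEnt p1) ∧
    mi2 p1 0 p2 0 = 0 := by
  have ha : 0 < p1 * (1 - r) := mul_pos hp1 (sub_pos.2 hr1)
  have hb : 0 < p1 * r := mul_pos hp1 hr0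
  have hmass : p1 * (1 - r) + p1 * r + p2 = 1 := by linear_combination hp
  have hupper := mi2_lt_binEnt_of_third_eq_zero ha hb hp2 hmass
  rw [show p1 * (1 - r) + p1 * r = p1 by ring] at hupper
  exact ⟨⟨mi2_pos_of_third_eq_zero ha hb hp2 hmass, hupper⟩, mi2_of_second_column_eq_zero hp⟩
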